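/- arXiv:2212.12371 — 3 statements merged into one kernel-verified Lean document; each statement's English description precedes it below -/
import Mathlib

section
/- Let E be a finite set, r : Finset E → ℤ a function with r(∅) = 0 and satisfying r(A) ≤ r(A ∪ {e}) ≤ r(A) + 1 for all A ⊆ E and e ∈ E. Suppose e ∈ E satisfies r(E \ {e}) = r(E) (e is not a coloop) and r({e}) = 1 (e is not a loop). Define T(r; x, y) = ∑_{A ⊆ E} (x−1)^{r(E)−r(A)} (y−1)^{|A|−r(A)} in the polynomial ring ℤ[x,y]. Let r₁ be the restriction of r to subsets of E \ {e} (deletion), and r₂(A) = r(A ∪ {e}) − r({e}) for A ⊆ E \ {e} (contraction). Then T(r; x, y) = T(r₁; x, y) + T(r₂; x, y). -/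
/-- Deletion–contraction for the Whitney rank form of the Tutte polynomial at an
ordinary edge (neither a loop nor a coloop). -/
theorem stmt_6 {α : Type*} [DecidableEq α] {R : Type*} [CommRing R] (x y : R)
    (E : Finset α) (r : Finset α → ℤ)
    (hr0 : r ∅ = 0)
    (hunit : ∀ A ⊆ E, ∀ e ∈ E, r A ≤ r (insert e A) ∧ r (insert e A) ≤ r A + 1)
    (e : α) (he : e ∈ E)
    (hnotcoloop : r (E.erase e) = r E)
    (hnotloop : r {e} = 1) :
    -- `T(r; x, y)`
    (∑ A ∈ E.powerset,
        (x - 1) ^ (r E - r A).toNat * (y - 1) ^ ((A.card : ℤ) - r A).toNat) =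
      -- `T(r₁; x, y)`, the deletion: `r` restricted to subsets of `E \ {e}`
      (∑ A ∈ (E.erase e).powerset,
        (x - 1) ^ (r (E.erase e) - r A).toNat * (y - 1) ^ ((A.card : ℤ) - r A).toNat) +
      -- `T(r₂; x, y)`, the contraction: `r₂ A = r (A ∪ {e}) − r {e}`
      (∑ A ∈ (E.erase e).powerset,
        (x - 1) ^ ((r (insert e (E.erase e)) - r {e}) - (r (insert e A) - r {e})).toNat *
          (y - 1) ^ ((A.card : ℤ) - (r (insert e A) - r {e})).toNat) := by
  have hE : E = insert e (E.erase e) := (Finset.insert_erase he).symm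
  have hne : e ∉ E.erase e := Finset.notMem_erase e E
  calc (∑ A ∈ E.powerset,
        (x - 1) ^ (r E - r A).toNat * (y - 1) ^ ((A.card : ℤ) - r A).toNat)
      = ∑ A ∈ (insert e (E.erase e)).powerset,
        (x - 1) ^ (r E - r A).toNat * (y - 1) ^ ((A.card : ℤ) - r A).toNat := by rw [← hE]
    _ = (∑ A ∈ (E.erase e).powerset,
          (x - 1) ^ (r E - r A).toNat * (y - 1) ^ ((A.card : ℤ) - r A).toNat) +
        ∑ A ∈ (E.erase e).powerset,
          (x - 1) ^ (r E - r (insert e A)).toNat *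
            (y - 1) ^ (((insert e A).card : ℤ) - r (insert e A)).toNat :=
        Finset.sum_powerset_insert hne _
    _ = _ := by
        congr 1
        · exact Finset.sum_congr rfl fun A hA => by rw [hnotcoloop]
        · refine Finset.sum_congr rfl fun A hA => ?_
          have heA : e ∉ A := fun h => hne (Finset.mem_powerset.mp hA h)
          rw [Finset.card_insert_of_notMem heA, ← hE]
          rw [hnotloop]
          push_cast
          ring_nf
end

section
/- Let E be a finite set and r : Finset E → ℤ a function with r(∅) = 0 and r(A ∪ {e}) = r(A) for all A ⊆ E and a fixed e ∈ E (e is a loop). Define T(r; x, y) = ∑_{A ⊆ E} (x−1)^{r(E)−r(A)} (y−1)^{|A|−r(A)}, and let r₁ be the restriction of r to subsets of E \ {e}. Then T(r; x, y) = y · T(r₁; x, y). -/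
/-- Loop case of deletion–contraction for the Whitney rank form of the Tutte polynomial:
if `e` is a loop (adding `e` never changes the rank) then `T(r; x, y) = y · T(r₁; x, y)`
where `r₁` is the restriction of the rank function `r` to subsets of `E \ {e}`. -/
theorem stmt_7 {α : Type*} [DecidableEq α] {R : Type*} [CommRing R] (x y : R)
    (E : Finset α) (r : Finset α → ℤ)
    (hr0 : r ∅ = 0)
    (hunit : ∀ A ⊆ E, ∀ e ∈ E, r A ≤ r (insert e A) ∧ r (insert e A) ≤ r A + 1)
    (e : α) (he : e ∈ E)
    (hloop : ∀ A ⊆ E, r (insert e A) = r A) :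
    (∑ A ∈ E.powerset,
        (x - 1) ^ (r E - r A).toNat * (y - 1) ^ ((A.card : ℤ) - r A).toNat) =
      y * ∑ A ∈ (E.erase e).powerset,
        (x - 1) ^ (r (E.erase e) - r A).toNat * (y - 1) ^ ((A.card : ℤ) - r A).toNat := by
  -- rank is subcardinal
  have hsub : ∀ A ⊆ E, r A ≤ A.card := by
    intro A
    induction A using Finset.induction_on with
    | empty => intro _; simp [hr0]
    | @insert a A ha ih =>
      intro h
      have haE : a ∈ E := h (Finset.mem_insert_self a A)
      have hAE : A ⊆ E := (Finset.subset_insert a A).trans h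
      have := (hunit A hAE a haE).2
      have := ih hAE
      rw [Finset.card_insert_of_notMem ha]
      push_cast
      omega
  have henotE : e ∉ E.erase e := Finset.notMem_erase e E
  have hEeq : E = insert e (E.erase e) := (Finset.insert_erase he).symm
  have hrE : r E = r (E.erase e) := by
    have h := hloop (E.erase e) (Finset.erase_subset e E)
    rwa [Finset.insert_erase he] at h
  calc
    (∑ A ∈ E.powerset,
        (x - 1) ^ (r E - r A).toNat * (y - 1) ^ ((A.card : ℤ) - r A).toNat)
      = ∑ A ∈ (E.erase e).powerset,
          (x - 1) ^ (r E - r A).toNat * (y - 1) ^ ((A.card : ℤ) - r A).toNat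
        + ∑ A ∈ (E.erase e).powerset,
          (x - 1) ^ (r E - r (insert e A)).toNat
            * (y - 1) ^ (((insert e A).card : ℤ) - r (insert e A)).toNat := by
        conv_lhs => rw [hEeq, Finset.sum_powerset_insert henotE]
        rw [← hEeq]
    _ = y * ∑ A ∈ (E.erase e).powerset,
          (x - 1) ^ (r (E.erase e) - r A).toNat * (y - 1) ^ ((A.card : ℤ) - r A).toNat := by
        rw [Finset.mul_sum, ← Finset.sum_add_distrib]
        apply Finset.sum_congr rfl
        intro A hA
        rw [Finset.mem_powerset] at hA
        have heA : e ∉ A := fun h => henotE (hA h)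
        have hAE : A ⊆ E := hA.trans (Finset.erase_subset e E)
        have h1 : r (insert e A) = r A := hloop A hAE
        have h2 : (insert e A).card = A.card + 1 := Finset.card_insert_of_notMem heA
        have h3 : r A ≤ A.card := hsub A hAE
        have h4 : (((insert e A).card : ℤ) - r A).toNat
            = ((A.card : ℤ) - r A).toNat + 1 := by
          rw [h2]; push_cast; omega
        rw [h1, h4, hrE, pow_succ]
        ring
end

section
/- Let E be a finite set, r : Finset E → ℤ with r(∅)=0 and the unit-increase property, and define r*(A) = |A| + r(E\A) − r(E). Fix e ∈ E. Then e is a loop for r (i.e., r({e}) = 0) if and only if e is a coloop for r* (i.e., r*(E\{e}) = r*(E) − 1), and the contraction of r* by e equals the dual of the deletion of r by e: for all A ⊆ E\{e}, (r*)/e (A) = (r restricted to E\{e})* (A), where (r*)/e(A) := r*(A ∪ {e}) − r*({e}) and the dual on E\{e} is taken with respect to the ground set E\{e}. -/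
/-- Duality exchanges loops and coloops and exchanges deletion and contraction:
`e` is a loop for `r` iff `e` is a coloop for the dual rank function `r*`, and the
contraction of `r*` by `e` coincides with the dual (taken over the ground set `E \ {e}`)
of the deletion of `r` by `e`. -/
theorem stmt_15 {α : Type*} [DecidableEq α]
    (E : Finset α) (r : Finset α → ℤ)
    (hr0 : r ∅ = 0)
    (hunit : ∀ A ⊆ E, ∀ e ∈ E, r A ≤ r (insert e A) ∧ r (insert e A) ≤ r A + 1)
    (e : α) (he : e ∈ E)
    (rdual : Finset α → ℤ)
    (hdual : ∀ A ⊆ E, rdual A = (A.card : ℤ) + r (E \ A) - r E) :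
    (r {e} = 0 ↔ rdual (E.erase e) = rdual E - 1) ∧
    (∀ A ⊆ E.erase e,
      rdual (insert e A) - rdual {e} =
        (A.card : ℤ) + r ((E.erase e) \ A) - r (E.erase e)) := by
  have hse : {e} ⊆ E := Finset.singleton_subset_iff.mpr he
  have hEe : E \ {e} = E.erase e := Finset.sdiff_singleton_eq_erase e E
  have h1 : rdual (E.erase e) = ((E.erase e).card : ℤ) + r (E \ (E.erase e)) - r E :=
    hdual _ (Finset.erase_subset _ _)
  have hEdiff : E \ (E.erase e) = {e} := by
    ext x
    simp only [Finset.mem_sdiff, Finset.mem_erase, Finset.mem_singleton]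
    constructor
    · rintro ⟨hx, h⟩
      by_contra hne
      exact h ⟨hne, hx⟩
    · rintro rfl; exact ⟨he, fun h => h.1 rfl⟩
  have hE : rdual E = (E.card : ℤ) + r (E \ E) - r E := hdual _ le_rfl
  rw [Finset.sdiff_self, hr0] at hE
  rw [hEdiff] at h1
  have hcard : ((E.erase e).card : ℤ) = (E.card : ℤ) - 1 := by
    rw [Finset.card_erase_of_mem he]
    have : 1 ≤ E.card := Finset.card_pos.mpr ⟨e, he⟩
    omega
  constructor
  · rw [h1, hE, hcard]; omega
  · intro A hA
    have hAE : A ⊆ E := hA.trans (Finset.erase_subset _ _)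
    have heA : e ∉ A := fun h => (Finset.mem_erase.mp (hA h)).1 rfl
    have hsub : insert e A ⊆ E := Finset.insert_subset he hAE
    have h2 : rdual (insert e A) = ((insert e A).card : ℤ) + r (E \ insert e A) - r E :=
      hdual _ hsub
    have h3 : rdual {e} = (({e} : Finset α).card : ℤ) + r (E \ {e}) - r E := hdual _ hse
    have hdsd : E \ insert e A = (E.erase e) \ A := by
      ext x
      simp only [Finset.mem_sdiff, Finset.mem_insert, Finset.mem_erase, Finset.mem_singleton]
      tauto
    rw [h2, h3, hdsd, Finset.card_insert_of_notMem heA, Finset.card_singleton, hEe]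
    push_cast
    ring
end
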